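/- arXiv:2308.15415 — 5 statements merged into one kernel-verified Lean document; each statement's English description precedes it below -/
import Mathlib

section
/- For every integer m ≥ 2, R(F_m − 1) = 1, i.e., F_m − 1 has exactly one representation as a sum of distinct Fibonacci numbers. -/
/-- Number of representations of `n` as a sum of distinct Fibonacci numbers. -/
noncomputable def R (n : ℕ) : ℕ :=
  Nat.card {s : Finset ℕ // (∀ x ∈ s, 0 < x ∧ ∃ m, Nat.fib m = x) ∧ ∑ x ∈ s, x = n}

noncomputable def A (H : ℕ) : ℕ := ∑ n ∈ Finset.range (H + 1), R n

noncomputable def V (H : ℕ) : ℕ := ∑ n ∈ Finset.range (H + 1), (R n) ^ 2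

/-!
The positive Fibonacci numbers below `F (k + 2)` are `F 2, …, F (k + 1)`, whose total is
`F (k + 3) - 2`. So every representation of `F (k + 3) - 1` must use `F (k + 2)`, and what is
left is a representation of `F (k + 3) - 1 - F (k + 2) = F (k + 1) - 1`. Induction then reduces
everything to `F 0 - 1 = F 1 - 1 = F 2 - 1 = 0`, whose only representation is the empty one.
-/

open Nat Finset

def IsFibRep (n : ℕ) (s : Finset ℕ) : Prop :=
  (∀ x ∈ s, 0 < x ∧ ∃ m, fib m = x) ∧ ∑ x ∈ s, x = n

lemma R_eq_one_of_existsUnique {n : ℕ} (h : ∃! s, IsFibRep n s) : R n = 1 := by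
  obtain ⟨s, hs, hs_unique⟩ := h
  exact Nat.card_eq_one_iff_exists.2 ⟨⟨s, hs⟩, fun t => Subtype.ext (hs_unique t.1 t.2)⟩

lemma exists_fib_add_two_eq {x : ℕ} (hx : 0 < x) (hfib : ∃ m, fib m = x) :
    ∃ j, fib (j + 2) = x := by
  obtain ⟨m, rfl⟩ := hfib
  match m with
  | 0 => simp at hx
  | 1 => exact ⟨0, rfl⟩
  | j + 2 => exact ⟨j, rfl⟩

lemma sum_range_fib_add_two_add_two (k : ℕ) : ∑ j ∈ range k, fib (j + 2) + 2 = fib (k + 3) := by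
  have h := fib_succ_eq_succ_sum (k + 2)
  rw [sum_range_succ', sum_range_succ'] at h
  simpa [add_assoc] using h.symm

namespace IsFibRep

variable {n : ℕ} {s : Finset ℕ}

lemma zero_iff : IsFibRep 0 s ↔ s = ∅ := by
  refine ⟨fun ⟨hpos, hsum⟩ => ?_, fun h => by simp [h, IsFibRep]⟩
  rw [sum_eq_zero_iff] at hsum
  exact eq_empty_of_forall_notMem fun x hx => (hpos x hx).1.ne' (hsum x hx)

lemma le_of_mem (h : IsFibRep n s) {x : ℕ} (hx : x ∈ s) : x ≤ n :=
  h.2 ▸ single_le_sum (f := id) (fun _ _ => Nat.zero_le _) hx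

lemma erase (h : IsFibRep n s) {x : ℕ} (hx : x ∈ s) : IsFibRep (n - x) (s.erase x) :=
  ⟨fun y hy => h.1 y (mem_of_mem_erase hy), by rw [← h.2, ← sum_erase_add s _ hx]; omega⟩

lemma insert_fib (h : IsFibRep n s) {k : ℕ} (hk : fib (k + 2) ∉ s) :
    IsFibRep (n + fib (k + 2)) (insert (fib (k + 2)) s) := by
  refine ⟨fun x hx => ?_, by rw [sum_insert hk, h.2, add_comm]⟩
  rcases mem_insert.1 hx with rfl | hx
  · exact ⟨fib_pos.2 (by omega), _, rfl⟩
  · exact h.1 x hx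

lemma add_two_le_fib_of_forall_lt (h : IsFibRep n s) {k : ℕ} (hs : ∀ x ∈ s, x < fib (k + 2)) :
    n + 2 ≤ fib (k + 3) := by
  have hsub : s ⊆ (range k).image fun j => fib (j + 2) := fun x hx => by
    obtain ⟨j, rfl⟩ := exists_fib_add_two_eq (h.1 x hx).1 (h.1 x hx).2
    exact mem_image.2 ⟨j, mem_range.2 (fib_add_two_strictMono.lt_iff_lt.1 (hs _ hx)), rfl⟩
  calc n + 2 = ∑ x ∈ s, x + 2 := by rw [h.2]
    _ ≤ ∑ x ∈ (range k).image (fun j => fib (j + 2)), x + 2 :=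
        Nat.add_le_add_right (sum_le_sum_of_subset (f := id) hsub) 2
    _ = fib (k + 3) := by
        rw [sum_image fun _ _ _ _ hij => fib_add_two_strictMono.injective hij,
          sum_range_fib_add_two_add_two]

lemma fib_add_two_mem {k : ℕ} (h : IsFibRep (fib (k + 3) - 1) s) : fib (k + 2) ∈ s := by
  have hfib : 2 ≤ fib (k + 3) := fib_add_two_strictMono.monotone (show 1 ≤ k + 1 by omega)
  obtain ⟨x, hx, hx_ge⟩ : ∃ x ∈ s, fib (k + 2) ≤ x := by
    by_contra! hlt
    have := h.add_two_le_fib_of_forall_lt hlt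
    omega
  obtain ⟨j, rfl⟩ := exists_fib_add_two_eq (h.1 x hx).1 (h.1 x hx).2
  have hj_lt : j < k + 1 := fib_add_two_strictMono.lt_iff_lt.1 <| show fib (j + 2) < fib (k + 3) by
    have := h.le_of_mem hx; omega
  obtain rfl : j = k := le_antisymm (by omega) (fib_add_two_strictMono.le_iff_le.1 hx_ge)
  exact hx

end IsFibRep

theorem existsUnique_isFibRep_fib_sub_one : ∀ m, ∃! s, IsFibRep (fib m - 1) s
  | 0 | 1 | 2 => ⟨∅, IsFibRep.zero_iff.2 rfl, fun _ => IsFibRep.zero_iff.1⟩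
  | k + 3 => by
    have hrec : fib (k + 3) = fib (k + 1) + fib (k + 2) := fib_add_two
    have hpos : 0 < fib (k + 1) := fib_pos.2 (by omega)
    have hlt : fib (k + 1) - 1 < fib (k + 2) := by
      have := fib_mono (show k + 1 ≤ k + 2 by omega); omega
    obtain ⟨t, ht, ht_unique⟩ := existsUnique_isFibRep_fib_sub_one (k + 1)
    have hnotMem : fib (k + 2) ∉ t := fun hmem => (ht.le_of_mem hmem).not_gt hlt
    refine ⟨insert (fib (k + 2)) t, ?_, fun s hs => ?_⟩
    · convert ht.insert_fib hnotMem using 1; omega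
    · have hmem := hs.fib_add_two_mem
      have herase : IsFibRep (fib (k + 1) - 1) (s.erase (fib (k + 2))) := by
        convert hs.erase hmem using 1; omega
      rw [← insert_erase hmem, ht_unique _ herase]

theorem R_fib_sub_one_general (m : ℕ) : R (Nat.fib m - 1) = 1 :=
  R_eq_one_of_existsUnique (existsUnique_isFibRep_fib_sub_one m)

theorem R_fib_sub_one (m : ℕ) (hm : 2 ≤ m) : R (Nat.fib m - 1) = 1 :=
  R_fib_sub_one_general m
end

section
/- For every integer m ≥ 2, R(F_m^2 − 1) = F_m. -/
/-- count of subsets of indices `2..k` whose fib-values sum to `n` -/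
def g (k n : ℕ) : ℕ :=
  ∑ S ∈ (Finset.Icc 2 k).powerset, if (∑ i ∈ S, Nat.fib i) = n then 1 else 0

lemma g_succ (k n : ℕ) (hk : 1 ≤ k) :
    g (k+1) n = g k n + (if Nat.fib (k+1) ≤ n then g k (n - Nat.fib (k+1)) else 0) := by
  have hins : Finset.Icc 2 (k+1) = insert (k+1) (Finset.Icc 2 k) := by
    ext x; simp [Finset.mem_Icc, Finset.mem_insert]; omega
  have hnm : (k+1) ∉ Finset.Icc 2 k := by simp
  rw [g, hins, Finset.sum_powerset_insert hnm]
  congr 1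
  rcases le_or_gt (Nat.fib (k+1)) n with h | h
  · rw [if_pos h, g]
    apply Finset.sum_congr rfl
    intro t ht
    have hkt : (k+1) ∉ t := fun hc => hnm (Finset.mem_powerset.1 ht hc)
    rw [Finset.sum_insert hkt]
    congr 1
    simp only [eq_iff_iff]
    omega
  · rw [if_neg (by omega)]
    apply Finset.sum_eq_zero
    intro t ht
    have hkt : (k+1) ∉ t := fun hc => hnm (Finset.mem_powerset.1 ht hc)
    rw [Finset.sum_insert hkt, if_neg (by omega)]

lemma sum_fib_Icc (k : ℕ) (hk : 1 ≤ k) :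
    (∑ i ∈ Finset.Icc 2 k, Nat.fib i) + 2 = Nat.fib (k+2) := by
  induction k with
  | zero => omega
  | succ k ih =>
    rcases Nat.lt_or_ge k 1 with h | h
    · interval_cases k
      · decide
    · have hins : Finset.Icc 2 (k+1) = insert (k+1) (Finset.Icc 2 k) := by
        ext x; simp [Finset.mem_Icc, Finset.mem_insert]; omega
      rw [hins, Finset.sum_insert (by simp), Nat.fib_add_two]
      have := ih h
      have e : Nat.fib (k+1+1) = Nat.fib (k+2) := by norm_num
      omega

lemma g_eq_zero (k n : ℕ) (hk : 1 ≤ k) (h : Nat.fib (k+2) < n + 2) : g k n = 0 := by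
  apply Finset.sum_eq_zero
  intro t ht
  rw [if_neg]
  intro hc
  have h1 : ∑ i ∈ t, Nat.fib i ≤ ∑ i ∈ Finset.Icc 2 k, Nat.fib i :=
    Finset.sum_le_sum_of_subset (Finset.mem_powerset.1 ht)
  have := sum_fib_Icc k hk
  omega

lemma g_stable (K n : ℕ) (hK : 1 ≤ K) (h : n < Nat.fib (K+1)) :
    ∀ k, K ≤ k → g k n = g K n := by
  intro k hk
  induction k with
  | zero => omega
  | succ k ih =>
    rcases Nat.lt_or_ge k K with h1 | h1
    · have : K = k + 1 := by omega
      rw [this]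
    · rw [g_succ k n (by omega), if_neg, ih h1, add_zero]
      have : Nat.fib (K+1) ≤ Nat.fib (k+1) := Nat.fib_mono (by omega)
      omega

lemma fib_inj {x y : ℕ} (hx : 2 ≤ x) (hy : 2 ≤ y) (h : Nat.fib x = Nat.fib y) : x = y := by
  by_contra hne
  rcases Nat.lt_or_ge x y with hl | hge
  · have h1 : Nat.fib x < Nat.fib (x+1) := Nat.fib_lt_fib_succ hx
    have h2 : Nat.fib (x+1) ≤ Nat.fib y := Nat.fib_mono (by omega)
    omega
  · have hl : y < x := by omega
    have h1 : Nat.fib y < Nat.fib (y+1) := Nat.fib_lt_fib_succ hy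
    have h2 : Nat.fib (y+1) ≤ Nat.fib x := Nat.fib_mono (by omega)
    omega

open Classical in
/-- index function: for a positive Fibonacci value, pick an index ≥ 2 -/
noncomputable def idx (x : ℕ) : ℕ :=
  if h : ∃ m, 2 ≤ m ∧ Nat.fib m = x then h.choose else 0

lemma idx_spec {x : ℕ} (hx : 0 < x) (h : ∃ m, Nat.fib m = x) :
    2 ≤ idx x ∧ Nat.fib (idx x) = x := by
  have hex : ∃ m, 2 ≤ m ∧ Nat.fib m = x := by
    obtain ⟨m, hm⟩ := h
    rcases Nat.lt_or_ge m 2 with h1 | h1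
    · interval_cases m
      · simp at hm; omega
      · exact ⟨2, by omega, by rw [← hm]; decide⟩
    · exact ⟨m, h1, hm⟩
  rw [idx]
  rw [dif_pos hex]
  exact hex.choose_spec

lemma R_eq_g (k n : ℕ) (hk : 1 ≤ k) (h : n < Nat.fib (k+1)) : R n = g k n := by
  classical
  set P : Finset ℕ → Prop :=
    fun s => (∀ x ∈ s, 0 < x ∧ ∃ m, Nat.fib m = x) ∧ ∑ x ∈ s, x = n with hP
  set F : Finset (Finset ℕ) :=
    (Finset.Icc 2 k).powerset.filter (fun S => ∑ i ∈ S, Nat.fib i = n) with hF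
  have hg : g k n = F.card := by
    rw [hF, Finset.card_filter, g]
  have hbij : ∀ S ∈ F, P (S.image Nat.fib) := by
    intro S hS
    rw [hF, Finset.mem_filter, Finset.mem_powerset] at hS
    constructor
    · intro x hx
      rw [Finset.mem_image] at hx
      obtain ⟨i, hi, hfi⟩ := hx
      have h2 : 2 ≤ i ∧ i ≤ k := Finset.mem_Icc.1 (hS.1 hi)
      refine ⟨?_, i, hfi⟩
      rw [← hfi]
      exact Nat.fib_pos.2 (by omega)
    · rw [Finset.sum_image (fun x hx y hy hxy =>
        fib_inj (Finset.mem_Icc.1 (hS.1 hx)).1 (Finset.mem_Icc.1 (hS.1 hy)).1 hxy)]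
      exact hS.2
  let Φ : {S // S ∈ F} → {s : Finset ℕ // P s} := fun S => ⟨S.1.image Nat.fib, hbij S.1 S.2⟩
  have hΦbij : Function.Bijective Φ := by
    constructor
    · rintro ⟨S, hS⟩ ⟨T, hT⟩ hST
      have hST' : S.image Nat.fib = T.image Nat.fib := congrArg Subtype.val hST
      rw [hF, Finset.mem_filter, Finset.mem_powerset] at hS hT
      ext i
      constructor
      · intro hi
        have : Nat.fib i ∈ T.image Nat.fib := hST' ▸ Finset.mem_image_of_mem _ hi
        obtain ⟨j, hj, hji⟩ := Finset.mem_image.1 this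
        have := fib_inj (Finset.mem_Icc.1 (hT.1 hj)).1 (Finset.mem_Icc.1 (hS.1 hi)).1 hji
        exact this ▸ hj
      · intro hi
        have : Nat.fib i ∈ S.image Nat.fib := hST'.symm ▸ Finset.mem_image_of_mem _ hi
        obtain ⟨j, hj, hji⟩ := Finset.mem_image.1 this
        have := fib_inj (Finset.mem_Icc.1 (hS.1 hj)).1 (Finset.mem_Icc.1 (hT.1 hi)).1 hji
        exact this ▸ hj
    · rintro ⟨s, hs1, hs2⟩
      have hidx : ∀ x ∈ s, 2 ≤ idx x ∧ Nat.fib (idx x) = x :=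
        fun x hx => idx_spec (hs1 x hx).1 (hs1 x hx).2
      have hinj : ∀ x ∈ s, ∀ y ∈ s, idx x = idx y → x = y := by
        intro x hx y hy hxy
        rw [← (hidx x hx).2, ← (hidx y hy).2, hxy]
      have hle : ∀ x ∈ s, x ≤ n := by
        intro x hx
        calc x ≤ ∑ y ∈ s, y := Finset.single_le_sum (fun y _ => Nat.zero_le y) hx
        _ = n := hs2
      have hsub : s.image idx ∈ (Finset.Icc 2 k).powerset := by
        rw [Finset.mem_powerset]
        intro i hi
        obtain ⟨x, hx, hxi⟩ := Finset.mem_image.1 hi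
        rw [Finset.mem_Icc]
        refine ⟨hxi ▸ (hidx x hx).1, ?_⟩
        by_contra hc
        have h1 : Nat.fib (k+1) ≤ Nat.fib i := Nat.fib_mono (by omega)
        have h2 : Nat.fib i = x := hxi ▸ (hidx x hx).2
        have := hle x hx
        omega
      have himg : (s.image idx).image Nat.fib = s := by
        rw [Finset.image_image]
        rw [show (Nat.fib ∘ idx) = fun x => Nat.fib (idx x) from rfl]
        ext x
        simp only [Finset.mem_image]
        constructor
        · rintro ⟨y, hy, rfl⟩
          rw [(hidx y hy).2]; exact hy
        · intro hx
          exact ⟨x, hx, (hidx x hx).2⟩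
      have hsum : ∑ i ∈ s.image idx, Nat.fib i = n := by
        rw [Finset.sum_image hinj]
        calc ∑ x ∈ s, Nat.fib (idx x) = ∑ x ∈ s, x :=
          Finset.sum_congr rfl (fun x hx => (hidx x hx).2)
        _ = n := hs2
      refine ⟨⟨s.image idx, ?_⟩, ?_⟩
      · rw [hF, Finset.mem_filter]
        exact ⟨hsub, hsum⟩
      · apply Subtype.ext
        exact himg
  calc R n = Nat.card {S // S ∈ F} := (Nat.card_eq_of_bijective Φ hΦbij).symm
  _ = F.card := Nat.card_eq_finsetCard F
  _ = g k n := hg.symm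

lemma fib_sq_add (b : ℕ) : Nat.fib (b+2)^2 = Nat.fib b^2 + Nat.fib (2*b+2) := by
  have h1 := Nat.fib_add b (b+1)
  rw [show b + (b+1) + 1 = 2*b+2 from by ring, show b+1+1 = b+2 from by ring] at h1
  have h2 : Nat.fib (b+2) = Nat.fib b + Nat.fib (b+1) := Nat.fib_add_two
  rw [h1, h2]; ring

lemma fib_prod (b : ℕ) :
    Nat.fib (2*b+2) = Nat.fib b * Nat.fib (b+1) + Nat.fib (b+1) * Nat.fib (b+2) := by
  have h1 := Nat.fib_add b (b+1)
  rw [show b + (b+1) + 1 = 2*b+2 from by ring, show b+1+1 = b+2 from by ring] at h1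
  exact h1

lemma step (c : ℕ) :
    R (Nat.fib (c+6)^2 - 1) + R (Nat.fib (c+2)^2 - 1) = 3 * R (Nat.fib (c+4)^2 - 1) := by
  have q1 : 0 < Nat.fib (c+2)^2 := pow_pos (Nat.fib_pos.2 (by omega)) 2
  have q2 : 0 < Nat.fib (c+4)^2 := pow_pos (Nat.fib_pos.2 (by omega)) 2
  have q3 : 0 < Nat.fib (c+6)^2 := pow_pos (Nat.fib_pos.2 (by omega)) 2
  have hA : Nat.fib (c+4)^2 = Nat.fib (c+2)^2 + Nat.fib (2*c+6) := by
    have h := fib_sq_add (c+2)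
    rw [show 2*(c+2)+2 = 2*c+6 from by ring, show c+2+2 = c+4 from by ring] at h
    exact h
  have hB : Nat.fib (c+6)^2 = Nat.fib (c+4)^2 + Nat.fib (2*c+10) := by
    have h := fib_sq_add (c+4)
    rw [show 2*(c+4)+2 = 2*c+10 from by ring, show c+4+2 = c+6 from by ring] at h
    exact h
  have h11 : Nat.fib (2*c+11) = Nat.fib (c+6)^2 + Nat.fib (c+5)^2 := by
    have h := Nat.fib_two_mul_add_one (c+5)
    rw [show 2*(c+5)+1 = 2*c+11 from by ring, show c+5+1 = c+6 from by ring] at h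
    omega
  have h7 : Nat.fib (2*c+7) = Nat.fib (c+4)^2 + Nat.fib (c+3)^2 := by
    have h := Nat.fib_two_mul_add_one (c+3)
    rw [show 2*(c+3)+1 = 2*c+7 from by ring, show c+3+1 = c+4 from by ring] at h
    omega
  have h3 : Nat.fib (2*c+3) = Nat.fib (c+2)^2 + Nat.fib (c+1)^2 := by
    have h := Nat.fib_two_mul_add_one (c+1)
    rw [show 2*(c+1)+1 = 2*c+3 from by ring, show c+1+1 = c+2 from by ring] at h
    omega
  have hadd10 : Nat.fib (2*c+10) = Nat.fib (2*c+8) + Nat.fib (2*c+9) := by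
    have h := Nat.fib_add_two (n := 2*c+8)
    rw [show 2*c+8+2 = 2*c+10 from by ring, show 2*c+8+1 = 2*c+9 from by ring] at h
    exact h
  have hadd8 : Nat.fib (2*c+8) = Nat.fib (2*c+6) + Nat.fib (2*c+7) := by
    have h := Nat.fib_add_two (n := 2*c+6)
    rw [show 2*c+6+2 = 2*c+8 from by ring, show 2*c+6+1 = 2*c+7 from by ring] at h
    exact h
  have hG2 : Nat.fib (c+3)^2 ≤ Nat.fib (2*c+6) := by
    have h := fib_prod (c+2)
    rw [show 2*(c+2)+2 = 2*c+6 from by ring, show c+2+1 = c+3 from by ring,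
        show c+2+2 = c+4 from by ring] at h
    have m1 : Nat.fib (c+3) ≤ Nat.fib (c+4) := Nat.fib_mono (by omega)
    nlinarith [Nat.fib (c+3), Nat.fib (c+2)]
  obtain ⟨A1, hA1⟩ : ∃ a, Nat.fib (c+2)^2 = a := ⟨_, rfl⟩
  obtain ⟨A2, hA2⟩ : ∃ a, Nat.fib (c+4)^2 = a := ⟨_, rfl⟩
  obtain ⟨A3, hA3⟩ : ∃ a, Nat.fib (c+6)^2 = a := ⟨_, rfl⟩
  rw [hA1] at q1 hA h3
  rw [hA2] at q2 hA hB h7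
  rw [hA3] at q3 hB h11
  rw [hA1, hA2, hA3]
  have st2 : ∀ k, 2*c+6 ≤ k → g k (A2-1) = g (2*c+6) (A2-1) := by
    apply g_stable _ _ (by omega)
    rw [show 2*c+6+1 = 2*c+7 from by ring]
    omega
  have hR2 : R (A2-1) = g (2*c+6) (A2-1) := by
    apply R_eq_g _ _ (by omega)
    rw [show 2*c+6+1 = 2*c+7 from by ring]
    omega
  have st1 : ∀ k, 2*c+2 ≤ k → g k (A1-1) = g (2*c+2) (A1-1) := by
    apply g_stable _ _ (by omega)
    rw [show 2*c+2+1 = 2*c+3 from by ring]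
    omega
  have hR1 : R (A1-1) = g (2*c+2) (A1-1) := by
    apply R_eq_g _ _ (by omega)
    rw [show 2*c+2+1 = 2*c+3 from by ring]
    omega
  have E0 : R (A3-1) = g (2*c+10) (A3-1) := by
    apply R_eq_g _ _ (by omega)
    rw [show 2*c+10+1 = 2*c+11 from by ring]
    omega
  have e1 := g_succ (2*c+9) (A3-1) (by omega)
  rw [show 2*c+9+1 = 2*c+10 from by ring] at e1
  rw [if_pos (by omega : Nat.fib (2*c+10) ≤ A3-1)] at e1
  rw [show A3 - 1 - Nat.fib (2*c+10) = A2 - 1 from by omega] at e1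
  have e1' : g (2*c+9) (A2-1) = R (A2-1) := by rw [st2 (2*c+9) (by omega), hR2]
  have e3 := g_succ (2*c+8) (A3-1) (by omega)
  rw [show 2*c+8+1 = 2*c+9 from by ring] at e3
  have z3 : g (2*c+8) (A3-1) = 0 := by
    apply g_eq_zero _ _ (by omega)
    rw [show 2*c+8+2 = 2*c+10 from by ring]
    omega
  rw [z3, if_pos (by omega : Nat.fib (2*c+9) ≤ A3-1)] at e3
  rw [show A3 - 1 - Nat.fib (2*c+9) = (A2-1) + Nat.fib (2*c+8) from by omega] at e3
  have e4 := g_succ (2*c+7) ((A2-1) + Nat.fib (2*c+8)) (by omega)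
  rw [show 2*c+7+1 = 2*c+8 from by ring] at e4
  rw [if_pos (by omega : Nat.fib (2*c+8) ≤ (A2-1) + Nat.fib (2*c+8))] at e4
  rw [show (A2-1) + Nat.fib (2*c+8) - Nat.fib (2*c+8) = A2 - 1 from by omega] at e4
  have e4' : g (2*c+7) (A2-1) = R (A2-1) := by rw [st2 (2*c+7) (by omega), hR2]
  have e5 := g_succ (2*c+6) ((A2-1) + Nat.fib (2*c+8)) (by omega)
  rw [show 2*c+6+1 = 2*c+7 from by ring] at e5
  have z5 : g (2*c+6) ((A2-1) + Nat.fib (2*c+8)) = 0 := by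
    apply g_eq_zero _ _ (by omega)
    rw [show 2*c+6+2 = 2*c+8 from by ring]
    omega
  rw [z5, if_pos (by omega : Nat.fib (2*c+7) ≤ (A2-1) + Nat.fib (2*c+8))] at e5
  rw [show (A2-1) + Nat.fib (2*c+8) - Nat.fib (2*c+7) = (A2-1) + Nat.fib (2*c+6) from by omega] at e5
  have e6 := g_succ (2*c+5) ((A2-1) + Nat.fib (2*c+6)) (by omega)
  rw [show 2*c+5+1 = 2*c+6 from by ring] at e6
  have z6 : g (2*c+5) ((A2-1) + Nat.fib (2*c+6)) = 0 := by
    apply g_eq_zero _ _ (by omega)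
    rw [show 2*c+5+2 = 2*c+7 from by ring]
    omega
  rw [z6, if_pos (by omega : Nat.fib (2*c+6) ≤ (A2-1) + Nat.fib (2*c+6))] at e6
  rw [show (A2-1) + Nat.fib (2*c+6) - Nat.fib (2*c+6) = A2 - 1 from by omega] at e6
  have e7 := g_succ (2*c+5) (A2-1) (by omega)
  rw [show 2*c+5+1 = 2*c+6 from by ring] at e7
  rw [if_pos (by omega : Nat.fib (2*c+6) ≤ A2-1)] at e7
  rw [show A2 - 1 - Nat.fib (2*c+6) = A1 - 1 from by omega] at e7
  have e7' : g (2*c+5) (A1-1) = R (A1-1) := by rw [st1 (2*c+5) (by omega), hR1]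
  omega

set_option maxRecDepth 100000 in
lemma key : ∀ m, 2 ≤ m → R (Nat.fib m ^ 2 - 1) = Nat.fib m := by
  intro m
  induction m using Nat.strong_induction_on with
  | _ m ih =>
    intro hm
    match m, hm with
    | 2, _ => rw [R_eq_g 1 _ (by omega) (by decide)]; decide
    | 3, _ => rw [R_eq_g 4 _ (by omega) (by decide)]; decide
    | 4, _ => rw [R_eq_g 6 _ (by omega) (by decide)]; decide
    | 5, _ => rw [R_eq_g 8 _ (by omega) (by decide)]; decide
    | (c+6), _ =>
      have h1 := ih (c+2) (by omega) (by omega)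
      have h2 := ih (c+4) (by omega) (by omega)
      have hs := step c
      rw [h1, h2] at hs
      have a1 := Nat.fib_add_two (n := c+4)
      have a2 := Nat.fib_add_two (n := c+3)
      have a3 := Nat.fib_add_two (n := c+2)
      rw [show c+4+2 = c+6 from by ring, show c+4+1 = c+5 from by ring] at a1
      rw [show c+3+2 = c+5 from by ring, show c+3+1 = c+4 from by ring] at a2
      rw [show c+2+2 = c+4 from by ring, show c+2+1 = c+3 from by ring] at a3
      omega

theorem R_fib_sq_sub_one (m : ℕ) (hm : 2 ≤ m) : R (Nat.fib m ^ 2 - 1) = Nat.fib m :=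
  key m hm
end

section
/- For every integer n ≥ 0, R(n) ≤ √(n+1). -/
open Finset Nat

def subsetSumCount (s : Finset ℕ) (m : ℕ) : ℕ := #{t ∈ s.powerset | ∑ x ∈ t, x = m}

section subsetSumCount

variable {s : Finset ℕ} {m : ℕ}

lemma subsetSumCount_eq_zero_of_sum_lt (h : ∑ x ∈ s, x < m) : subsetSumCount s m = 0 := by
  refine card_eq_zero.2 (filter_eq_empty_iff.2 fun t ht htm => ?_)
  have := sum_le_sum_of_subset (f := id) (mem_powerset.1 ht)
  simp only [id] at this
  omega

lemma subsetSumCount_sum_sub (h : m ≤ ∑ x ∈ s, x) :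
    subsetSumCount s (∑ x ∈ s, x - m) = subsetSumCount s m := by
  have compl_mem : ∀ m' t, t ∈ s.powerset.filter (∑ x ∈ ·, x = m') →
      s \ t ∈ s.powerset.filter (∑ x ∈ ·, x = ∑ x ∈ s, x - m') := by
    intro m' t ht
    simp only [mem_filter, mem_powerset] at ht ⊢
    have := sum_sdiff (f := id) ht.1
    simp only [id] at this
    exact ⟨sdiff_subset, by omega⟩
  refine card_nbij' (s \ ·) (s \ ·) (fun t ht => ?_) (fun t ht => ?_)
    (fun t ht => Finset.sdiff_sdiff_eq_self (mem_powerset.1 (mem_filter.1 ht).1))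
    (fun t ht => Finset.sdiff_sdiff_eq_self (mem_powerset.1 (mem_filter.1 ht).1))
  · simpa [Nat.sub_sub_self h] using compl_mem _ t ht
  · exact compl_mem m t ht

lemma subsetSumCount_insert {a : ℕ} (ha : a ∉ s) (m : ℕ) :
    subsetSumCount (insert a s) m =
      subsetSumCount s m + if a ≤ m then subsetSumCount s (m - a) else 0 := by
  simp only [subsetSumCount, card_filter, sum_powerset_insert ha]
  congr 1
  have : ∀ t ∈ s.powerset, ∑ x ∈ insert a t, x = a + ∑ x ∈ t, x := fun t ht =>
    sum_insert fun hat => ha (mem_powerset.1 ht hat)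
  rw [sum_congr rfl fun t ht => by rw [this t ht]]
  split_ifs with ham
  · exact sum_congr rfl fun t _ => if_congr (by omega) rfl rfl
  · exact sum_eq_zero fun t _ => if_neg (by omega)

lemma sq_subsetSumCount_le_min (h : ∀ m, subsetSumCount s m ^ 2 ≤ m + 1) (m : ℕ) :
    subsetSumCount s m ^ 2 ≤ min m (∑ x ∈ s, x - m) + 1 := by
  rcases le_or_gt m (∑ x ∈ s, x) with hm | hm
  · have := h (∑ x ∈ s, x - m)
    rw [subsetSumCount_sum_sub hm] at this
    exact (le_min (h m) this).trans_eq (min_add_add_right _ _ _)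
  · simp [subsetSumCount_eq_zero_of_sum_lt hm]

end subsetSumCount

lemma four_mul_mul_le_sq_of_add_eq_fib {X Y k : ℕ} (h : X + Y = fib (k + 1)) :
    4 * X * Y ≤ (Y + fib k) ^ 2 := by
  have cassini : -1 ≤ (fib (k + 2) * fib k - fib (k + 1) ^ 2 : ℤ) := by
    have := Int.fib_succ_mul_fib_pred_sub_fib_sq ((k : ℤ) + 1)
    rw [add_sub_cancel_right, show (k : ℤ) + 1 + 1 = (k + 2 : ℕ) by push_cast; ring,
      show (k : ℤ) + 1 = (k + 1 : ℕ) by push_cast; ring] at this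
    simp only [Int.fib_natCast] at this
    rw [this]
    simpa only [abs_neg_one_pow] using neg_abs_le ((-1 : ℤ) ^ ((k + 1 : ℕ) : ℤ).natAbs)
  have hfib : (fib (k + 2) : ℤ) = fib k + fib (k + 1) := mod_cast fib_add_two
  zify at h ⊢
  -- `5 * ((Y + F_k)² - 4XY)` is a square minus at most `4`, hence not a negative multiple of `5`.
  have key :
      (5 * Y - (2 * fib (k + 1) - fib k) : ℤ) ^ 2 ≤ 5 * ((Y + fib k) ^ 2 - 4 * X * Y) + 4 := by
    nlinarith [cassini, hfib, h]
  by_contra! hneg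
  linarith [sq_nonneg (5 * Y - (2 * fib (k + 1) - fib k) : ℤ)]

lemma sq_add_le_of_mul_le_sq {a b X Y D : ℕ} (ha : a ^ 2 ≤ X) (hb : b ^ 2 ≤ Y)
    (hXY : 4 * X * Y ≤ D ^ 2) : (a + b) ^ 2 ≤ X + Y + D := by
  have : 2 * a * b ≤ D := by
    refine Nat.pow_le_pow_iff_left two_ne_zero |>.1 ?_
    calc (2 * a * b) ^ 2 = 4 * a ^ 2 * b ^ 2 := by ring
      _ ≤ 4 * X * Y := by gcongr
      _ ≤ D ^ 2 := hXY
  nlinarith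

def fibSet (k : ℕ) : Finset ℕ := (range k).image fun i => fib (i + 2)

lemma fib_add_two_notMem_fibSet (k : ℕ) : fib (k + 2) ∉ fibSet k := by
  simp [fibSet, fib_add_two_strictMono.injective.eq_iff]

lemma fibSet_succ (k : ℕ) : fibSet (k + 1) = insert (fib (k + 2)) (fibSet k) := by
  rw [fibSet, range_add_one, image_insert, fibSet]

lemma sum_fibSet_add_two (k : ℕ) : ∑ x ∈ fibSet k, x + 2 = fib (k + 3) := by
  induction k with
  | zero => rfl
  | succ k ih =>
    rw [fibSet_succ, sum_insert (fib_add_two_notMem_fibSet k), add_assoc, ih,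
      fib_add_two (n := k + 2)]

lemma sq_subsetSumCount_fibSet_le (k m : ℕ) : subsetSumCount (fibSet k) m ^ 2 ≤ m + 1 := by
  induction k generalizing m with
  | zero =>
    have : subsetSumCount (fibSet 0) m ≤ 1 := (card_filter_le _ _).trans (by simp [fibSet])
    nlinarith
  | succ k ih =>
    have hS := sum_fibSet_add_two k
    have hF : fib (k + 3) = fib (k + 1) + fib (k + 2) := fib_add_two
    have hF' : fib (k + 2) = fib k + fib (k + 1) := fib_add_two
    rw [fibSet_succ, subsetSumCount_insert (fib_add_two_notMem_fibSet k)]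
    split_ifs with hFm
    · rcases le_or_gt m (∑ x ∈ fibSet k, x) with hmS | hmS
      · set X := ∑ x ∈ fibSet k, x - m + 1
        set Y := m - fib (k + 2) + 1
        have hX : subsetSumCount (fibSet k) m ^ 2 ≤ X :=
          (sq_subsetSumCount_le_min ih m).trans (by omega)
        have hXY : X + Y = fib (k + 1) := by omega
        calc _ ≤ X + Y + (Y + fib k) :=
              sq_add_le_of_mul_le_sq hX (ih _) (four_mul_mul_le_sq_of_add_eq_fib hXY)
          _ = m + 1 := by omega
      · rw [subsetSumCount_eq_zero_of_sum_lt hmS, zero_add]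
        exact (ih _).trans (by omega)
    · simpa using ih m

lemma mem_fibSet_of_le {x m k : ℕ} (hx : 0 < x) (hm : fib m = x) (hxk : x ≤ k) :
    x ∈ fibSet k := by
  obtain ⟨i, rfl⟩ : ∃ i, fib (i + 2) = x := by
    rcases m with _ | _ | i
    · simp_all
    · exact ⟨0, hm⟩
    · exact ⟨i, hm⟩
  have := le_fib_add_one (i + 2)
  exact mem_image.2 ⟨i, mem_range.2 (by omega), rfl⟩

lemma R_eq_subsetSumCount_fibSet {n k : ℕ} (h : n ≤ k) : R n = subsetSumCount (fibSet k) n := by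
  rw [R, subsetSumCount, ← Nat.card_eq_finsetCard]
  refine Nat.card_congr (Equiv.subtypeEquivRight fun t => ?_)
  simp only [mem_filter, mem_powerset, and_congr_left_iff]
  intro ht
  refine ⟨fun hfib x hx => ?_, fun hsub x hx => ?_⟩
  · obtain ⟨hx0, m, hm⟩ := hfib x hx
    exact mem_fibSet_of_le hx0 hm (ht ▸ single_le_sum (fun _ _ => zero_le _) hx |>.trans h)
  · obtain ⟨i, -, rfl⟩ := mem_image.1 (hsub hx)
    exact ⟨fib_pos.2 (succ_pos _), _, rfl⟩

theorem R_le_sqrt (n : ℕ) : (R n : ℝ) ≤ Real.sqrt (n + 1) := by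
  rw [R_eq_subsetSumCount_fibSet le_rfl]
  exact Real.le_sqrt_of_sq_le (mod_cast sq_subsetSumCount_fibSet_le n n)
end

section
/- Every root of x^5 − 2x^4 − 3x^3 + 4x^2 + 2x − 2 other than the greatest root λ₁ of x^3 − 2x^2 − 2x + 2 has absolute value strictly less than λ₁; i.e., λ₁ is the unique dominant root of the quintic. -/
/-!
The quintic is `(z² - 1) · c(z)` with `c(z) = z³ - 2z² - 2z + 2`, and `c` changes sign on `[2, 3]`,
so `λ₁ > 2` and the roots `±1` are smaller in modulus. Dividing `c` by `z - λ₁` leaves a real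
quadratic whose discriminant `-3λ₁² + 4λ₁ + 12` is positive because `λ₁ < 11/4`, so every root of
`c` is real. Real roots of `c` exceed `-2 > -λ₁`, and those other than `λ₁` lie below it.
-/

def cubic {R : Type*} [CommRing R] (x : R) : R := x ^ 3 - 2 * x ^ 2 - 2 * x + 2

section CommRing

variable {R : Type*} [CommRing R]

theorem quintic_eq_mul_cubic (z : R) :
    z ^ 5 - 2 * z ^ 4 - 3 * z ^ 3 + 4 * z ^ 2 + 2 * z - 2 = (z ^ 2 - 1) * cubic z := by
  unfold cubic; ring

theorem cubic_sub_cubic (z w : R) :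
    cubic z - cubic w = (z - w) * (1 * (z * z) + (w - 2) * z + (w ^ 2 - 2 * w - 2)) := by
  unfold cubic; ring

end CommRing

@[norm_cast]
theorem Complex.ofReal_cubic (x : ℝ) : ((cubic x : ℝ) : ℂ) = cubic (x : ℂ) := by
  simp [cubic]

theorem exists_cubic_eq_zero_mem_Icc : ∃ r ∈ Set.Icc (2 : ℝ) 3, cubic r = 0 := by
  have hcont : ContinuousOn (cubic : ℝ → ℝ) (Set.Icc 2 3) := by unfold cubic; fun_prop
  exact intermediate_value_Icc (by norm_num) hcont (by norm_num [cubic])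

theorem neg_two_lt_of_cubic_eq_zero {x : ℝ} (hx : cubic x = 0) : -2 < x := by
  unfold cubic at hx
  nlinarith [sq_nonneg (x + 2), sq_nonneg x]

theorem lt_eleven_div_four_of_cubic_eq_zero {l : ℝ} (hl : cubic l = 0) : l < 11 / 4 := by
  unfold cubic at hl
  nlinarith [sq_nonneg (l - 2)]

theorem exists_ofReal_eq_of_quadratic_eq_zero {a b c : ℝ} (ha : a ≠ 0) (hd : 0 ≤ discrim a b c)
    {z : ℂ} (hz : a * (z * z) + b * z + c = 0) : ∃ x : ℝ, z = x := by
  have hs : discrim (a : ℂ) b c = √(discrim a b c) * √(discrim a b c) := by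
    rw [← Complex.ofReal_mul, Real.mul_self_sqrt hd]; simp [discrim]
  rcases (quadratic_eq_zero_iff (by exact_mod_cast ha) hs z).1 hz with rfl | rfl
  · exact ⟨(-b + √(discrim a b c)) / (2 * a), by push_cast; rfl⟩
  · exact ⟨(-b - √(discrim a b c)) / (2 * a), by push_cast; rfl⟩

theorem dominant_root (l : ℝ)
    (hroot : l ^ 3 - 2 * l ^ 2 - 2 * l + 2 = 0)
    (hmax : ∀ x : ℝ, x ^ 3 - 2 * x ^ 2 - 2 * x + 2 = 0 → x ≤ l) :
    ∀ z : ℂ, z ^ 5 - 2 * z ^ 4 - 3 * z ^ 3 + 4 * z ^ 2 + 2 * z - 2 = 0 →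
      z ≠ (l : ℂ) → ‖z‖ < l := by
  intro z hz hne
  obtain ⟨r, hr, hcr⟩ := exists_cubic_eq_zero_mem_Icc
  have hl2 : 2 < l := (hr.1.trans (hmax r hcr)).lt_of_ne fun h => by norm_num [← h] at hroot
  rw [quintic_eq_mul_cubic, mul_eq_zero, sub_eq_zero] at hz
  rcases hz with hsq | hcub
  · have h1 : ‖z‖ = 1 := (pow_eq_one_iff_of_nonneg (norm_nonneg z) two_ne_zero).1 (by
      rw [← norm_pow, hsq, norm_one])
    linarith
  have hquad : 1 * (z * z) + ((l - 2 : ℝ) : ℂ) * z + ((l ^ 2 - 2 * l - 2 : ℝ) : ℂ) = 0 := by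
    have := cubic_sub_cubic z (l : ℂ)
    rw [hcub, ← Complex.ofReal_cubic, show cubic l = 0 from hroot] at this
    push_cast
    simpa [sub_eq_zero, hne] using this.symm
  have hdisc : 0 ≤ discrim 1 (l - 2) (l ^ 2 - 2 * l - 2) := by
    unfold discrim; nlinarith [lt_eleven_div_four_of_cubic_eq_zero hroot]
  obtain ⟨x, rfl⟩ := exists_ofReal_eq_of_quadratic_eq_zero one_ne_zero hdisc (by exact_mod_cast hquad)
  have hcx : cubic x = 0 := by exact_mod_cast hcub
  have hxl : x < l := (hmax x hcx).lt_of_ne (by exact_mod_cast hne)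
  rw [Complex.norm_real, Real.norm_eq_abs, abs_lt]
  constructor <;> linarith [neg_two_lt_of_cubic_eq_zero hcx]
end

section
/- There exist constants C₂ > C₁ > 0 such that for all H ∈ ℕ with H ≥ 1, C₁ H^{(log λ₁)/log φ} ≤ V(H) ≤ C₂ H^{(log λ₁)/log φ}, where φ = (1+√5)/2 and λ₁ is the greatest root of x^3 − 2x^2 − 2x + 2. -/
open Finset Real
open scoped goldenRatio

lemma goldenRatio_pow_le_fib (n : ℕ) : φ ^ n ≤ Nat.fib (n + 2) := by
  rw [← fib_succ_sub_goldenConj_mul_fib, Nat.fib_add_two, Nat.cast_add]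
  nlinarith [neg_one_lt_goldenConj, (Nat.fib n).cast_nonneg (α := ℝ)]

lemma fib_succ_le_goldenRatio_pow (n : ℕ) : (Nat.fib (n + 1) : ℝ) ≤ φ ^ n := by
  rw [← fib_succ_sub_goldenConj_mul_fib]
  nlinarith [goldenConj_neg, (Nat.fib n).cast_nonneg (α := ℝ)]

lemma goldenRatio_pow_rpow_logb {l : ℝ} (hl : 0 < l) (k : ℕ) :
    (φ ^ k) ^ logb φ l = l ^ k := by
  rw [← rpow_pow_comm goldenRatio_pos.le, rpow_logb goldenRatio_pos one_lt_goldenRatio.ne' hl]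

lemma greatest_root_mem_Icc {l : ℝ} (hroot : l ^ 3 - 2 * l ^ 2 - 2 * l + 2 = 0)
    (hmax : ∀ x : ℝ, x ^ 3 - 2 * x ^ 2 - 2 * x + 2 = 0 → x ≤ l) :
    l ∈ Set.Icc (12 / 5) (5 / 2) := by
  have hcont : Continuous fun x : ℝ => x ^ 3 - 2 * x ^ 2 - 2 * x + 2 := by fun_prop
  obtain ⟨r, hr, hr_root⟩ := intermediate_value_Icc (by norm_num : (12 / 5 : ℝ) ≤ 5 / 2)
    hcont.continuousOn (show (0 : ℝ) ∈ Set.Icc _ _ by norm_num)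
  refine ⟨hr.1.trans (hmax r hr_root), ?_⟩
  by_contra! h
  have hq : 0 < l ^ 2 + l / 2 - 3 / 4 := by nlinarith
  -- `x³ - 2x² - 2x + 2 = (x - 5/2) (x² + x/2 - 3/4) + 1/8`
  nlinarith [mul_pos (sub_pos.2 h) hq]

namespace FibRep

def posFib (i : ℕ) : ℕ := Nat.fib (i + 2)

lemma posFib_strictMono : StrictMono posFib :=
  fun _ _ h => Nat.fib_add_two_strictMono h

def posFibEmb : ℕ ↪ ℕ := ⟨posFib, posFib_strictMono.injective⟩

lemma exists_posFib_eq {k : ℕ} (hk : 0 < Nat.fib k) : ∃ i, posFib i = Nat.fib k :=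
  match k with
  | 0 => absurd hk (by simp)
  | 1 => ⟨0, rfl⟩
  | i + 2 => ⟨i, rfl⟩

def fibSum (s : Finset ℕ) : ℕ := ∑ i ∈ s, posFib i

lemma fibSum_range_add_two (m : ℕ) : fibSum (range m) + 2 = posFib (m + 1) := by
  induction m with
  | zero => rfl
  | succ m ih =>
    rw [fibSum, sum_range_succ, ← fibSum]
    have : posFib (m + 1 + 1) = posFib m + posFib (m + 1) := Nat.fib_add_two
    omega

lemma fibSum_lt {m : ℕ} {s : Finset ℕ} (hs : s ⊆ range m) : fibSum s < posFib (m + 1) := by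
  have : fibSum s ≤ fibSum (range m) := sum_le_sum_of_subset hs
  linarith [fibSum_range_add_two m]

lemma fibSum_insert {m : ℕ} {s : Finset ℕ} (hs : s ⊆ range m) :
    fibSum (insert m s) = fibSum s + posFib m := by
  rw [fibSum, sum_insert fun h => by simpa using hs h, add_comm]; rfl

/-- Representations of `n` by the first `m` positive Fibonacci numbers, as sets of indices. -/
def repCount (m n : ℕ) : ℕ := #{s ∈ (range m).powerset | fibSum s = n}

lemma repCount_mono {m m' : ℕ} (h : m ≤ m') (n : ℕ) : repCount m n ≤ repCount m' n :=
  card_le_card <| filter_subset_filter _ <| powerset_mono.2 <| range_subset_range.2 h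

lemma R_eq_repCount {m n : ℕ} (hn : n < posFib m) : R n = repCount m n := by
  rw [repCount, ← card_map (mapEmbedding posFibEmb).toEmbedding]
  refine Nat.subtype_card _ fun s => ?_
  simp only [mem_map, mem_filter, mem_powerset]
  constructor
  · rintro ⟨t, ⟨ht, rfl⟩, rfl⟩
    refine ⟨fun x hx => ?_, by simp [fibSum, posFibEmb]⟩
    obtain ⟨i, -, rfl⟩ := mem_map.1 hx
    exact ⟨Nat.fib_pos.2 (by omega), i + 2, rfl⟩
  · rintro ⟨hfib, rfl⟩
    have hsub : s ⊆ (range m).map posFibEmb := fun x hx => by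
      obtain ⟨hx0, k, rfl⟩ := hfib x hx
      obtain ⟨i, hi⟩ := exists_posFib_eq hx0
      have : posFib i < posFib m := hi ▸ (single_le_sum (by simp) hx).trans_lt hn
      exact mem_map.2 ⟨i, mem_range.2 (posFib_strictMono.lt_iff_lt.1 this), hi⟩
    obtain ⟨t, ht, rfl⟩ := subset_map_iff.1 hsub
    exact ⟨t, ⟨ht, by simp [fibSum, posFibEmb]⟩, rfl⟩

lemma repCount_le_R (m n : ℕ) : repCount m n ≤ R n := by
  have hn : n < posFib (max m (n + 1)) := (Nat.lt_succ_self n).trans_le <|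
    (posFib_strictMono.id_le _).trans (posFib_strictMono.monotone (le_max_right _ _))
  exact R_eq_repCount hn ▸ repCount_mono (le_max_left _ _) n

def diffInd (t : ℤ) (x y : ℕ) : ℕ := if (x : ℤ) = y + t then 1 else 0

/-- The number of pairs `(a, b)` of index sets in `range m` with `fibSum a - fibSum b = t`. -/
def diffCount (m : ℕ) (t : ℤ) : ℕ :=
  ∑ a ∈ (range m).powerset, ∑ b ∈ (range m).powerset, diffInd t (fibSum a) (fibSum b)

lemma sum_powerset_range_succ_fibSum {M : Type*} [AddCommMonoid M] (m : ℕ) (f : ℕ → M) :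
    ∑ s ∈ (range (m + 1)).powerset, f (fibSum s) =
      ∑ s ∈ (range m).powerset, (f (fibSum s) + f (fibSum s + posFib m)) := by
  rw [range_add_one, sum_powerset_insert notMem_range_self, ← sum_add_distrib]
  refine sum_congr rfl fun s hs => ?_
  rw [fibSum_insert (mem_powerset.1 hs)]

lemma diffInd_add_left (t : ℤ) (x y p : ℕ) : diffInd t (x + p) y = diffInd (t - p) x y := by
  simp only [diffInd]; congr 1; grind

lemma diffInd_add_right (t : ℤ) (x y p : ℕ) : diffInd t x (y + p) = diffInd (t + p) x y := by
  simp only [diffInd]; congr 1; grind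

lemma diffCount_succ (m : ℕ) (t : ℤ) :
    diffCount (m + 1) t =
      2 * diffCount m t + diffCount m (t - posFib m) + diffCount m (t + posFib m) := by
  have inner (t : ℤ) (x : ℕ) := sum_powerset_range_succ_fibSum m (diffInd t x)
  simp only [diffCount]
  rw [sum_powerset_range_succ_fibSum m fun x => ∑ b ∈ _, diffInd t x (fibSum b)]
  simp only [inner, sum_add_distrib, diffInd_add_left, diffInd_add_right, sub_add_cancel]
  ring

lemma diffCount_neg (m : ℕ) (t : ℤ) : diffCount m (-t) = diffCount m t := by
  rw [diffCount, diffCount, sum_comm]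
  simp only [diffInd]
  refine sum_congr rfl fun _ _ => sum_congr rfl fun _ _ => ?_
  congr 1; grind

lemma diffCount_eq_zero {m : ℕ} {t : ℤ} (ht : posFib (m + 1) ≤ t) : diffCount m t = 0 := by
  refine sum_eq_zero fun a ha => sum_eq_zero fun b _ => if_neg ?_
  have := fibSum_lt (mem_powerset.1 ha)
  omega

lemma diffCount_zero (m : ℕ) :
    diffCount m 0 = ∑ n ∈ range (posFib (m + 1)), repCount m n ^ 2 := by
  have inner (a : Finset ℕ) :
      ∑ b ∈ (range m).powerset, diffInd 0 (fibSum a) (fibSum b) = repCount m (fibSum a) := by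
    rw [repCount, card_filter]
    refine sum_congr rfl fun b _ => ?_
    simp only [diffInd, add_zero, Nat.cast_inj, eq_comm]
  rw [diffCount,
    ← sum_fiberwise_of_maps_to fun a ha => mem_range.2 (fibSum_lt (mem_powerset.1 ha))]
  refine sum_congr rfl fun n _ => ?_
  rw [sum_congr rfl fun a ha => (inner a).trans (congrArg _ (mem_filter.1 ha).2), sum_const,
    smul_eq_mul, sq, repCount]

lemma diffCount_succ_posFib (j : ℕ) :
    diffCount (j + 1) (posFib (j + 1)) = diffCount j (Nat.fib (j + 1)) := by
  have hfib : posFib (j + 1) = Nat.fib (j + 1) + posFib j := Nat.fib_add_two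
  have hbig : diffCount j (posFib (j + 1) + posFib j) = 0 :=
    diffCount_eq_zero (by omega)
  have hsub : (posFib (j + 1) : ℤ) - posFib j = Nat.fib (j + 1) := by rw [hfib]; push_cast; ring
  rw [diffCount_succ, diffCount_eq_zero le_rfl, hbig, hsub]
  ring

lemma diffCount_add_two_zero (k : ℕ) :
    diffCount (k + 2) 0 = 2 * diffCount (k + 1) 0 + 2 * diffCount k (Nat.fib (k + 1)) := by
  rw [diffCount_succ, zero_sub, diffCount_neg, zero_add, diffCount_succ_posFib]
  ring

lemma diffCount_add_two_fib (k : ℕ) :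
    diffCount (k + 2) (Nat.fib (k + 3)) =
      diffCount (k + 1) 0 + 2 * diffCount k (Nat.fib (k + 1)) := by
  have hfib : posFib (k + 1 + 1) = posFib k + posFib (k + 1) := Nat.fib_add_two
  have hmono : posFib k ≤ posFib (k + 1) := posFib_strictMono.monotone k.le_succ
  have hbig : diffCount (k + 1) (posFib (k + 1) + posFib (k + 1)) = 0 :=
    diffCount_eq_zero (by omega)
  rw [show (Nat.fib (k + 3) : ℤ) = posFib (k + 1) from rfl, diffCount_succ, sub_self, hbig,
    diffCount_succ_posFib]
  ring

lemma diffCount_base :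
    diffCount 1 0 = 2 ∧ diffCount 1 1 = 1 ∧ diffCount 2 0 = 4 ∧ diffCount 2 2 = 2 := by
  decide

lemma V_le_diffCount {H k : ℕ} (hH : H < posFib (k + 1)) : V H ≤ diffCount (k + 1) 0 := by
  have hH' : H + 1 ≤ posFib (k + 1 + 1) := hH.trans (posFib_strictMono (Nat.lt_succ_self _))
  rw [V, diffCount_zero]
  calc ∑ n ∈ range (H + 1), R n ^ 2 = ∑ n ∈ range (H + 1), repCount (k + 1) n ^ 2 :=
        sum_congr rfl fun n hn => by rw [R_eq_repCount (m := k + 1) (by simp at hn; omega)]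
    _ ≤ _ := sum_le_sum_of_subset (range_subset_range.2 hH')

lemma diffCount_le_V {m H : ℕ} (hH : posFib (m + 1) ≤ H + 1) : diffCount m 0 ≤ V H := by
  rw [V, diffCount_zero]
  calc ∑ n ∈ range (posFib (m + 1)), repCount m n ^ 2
        ≤ ∑ n ∈ range (posFib (m + 1)), R n ^ 2 :=
          sum_le_sum fun n _ => Nat.pow_le_pow_left (repCount_le_R m n) 2
    _ ≤ _ := sum_le_sum_of_subset (range_subset_range.2 hH)

/-- The recurrence of `k ↦ diffCount (k + 1) 0` and `k ↦ diffCount (k + 1) (fib (k + 2))`. -/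
def DiffRecurrence (a c : ℕ → ℝ) : Prop :=
  ∀ k, a (k + 2) = 2 * a (k + 1) + 2 * c k ∧ c (k + 2) = a (k + 1) + 2 * c k

lemma DiffRecurrence.le_of_le {a c a' c' : ℕ → ℝ} (h : DiffRecurrence a c)
    (h' : DiffRecurrence a' c') (ha₀ : a 0 ≤ a' 0) (hc₀ : c 0 ≤ c' 0) (ha₁ : a 1 ≤ a' 1)
    (hc₁ : c 1 ≤ c' 1) (k : ℕ) : a k ≤ a' k ∧ c k ≤ c' k := by
  induction k using Nat.twoStepInduction with
  | zero => exact ⟨ha₀, hc₀⟩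
  | one => exact ⟨ha₁, hc₁⟩
  | more k ih₀ ih₁ =>
    rw [(h k).1, (h k).2, (h' k).1, (h' k).2]
    constructor <;> linarith [ih₀.2, ih₁.1]

lemma diffRecurrence_geometric {l : ℝ} (hroot : l ^ 3 - 2 * l ^ 2 - 2 * l + 2 = 0) (κ : ℝ) :
    DiffRecurrence (fun k => κ * l ^ k) (fun k => κ * ((l ^ 2 - 2 * l) / 2) * l ^ k) :=
  fun k => ⟨by ring, by linear_combination κ * l ^ (k + 1) / 2 * hroot⟩

lemma diffRecurrence_diffCount :
    DiffRecurrence (fun k => (diffCount (k + 1) 0 : ℝ))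
      (fun k => (diffCount (k + 1) (Nat.fib (k + 2)) : ℝ)) :=
  fun k => ⟨by dsimp only; exact_mod_cast diffCount_add_two_zero (k + 1),
    by dsimp only; exact_mod_cast diffCount_add_two_fib (k + 1)⟩

lemma diffCount_bounds {l : ℝ} (hroot : l ^ 3 - 2 * l ^ 2 - 2 * l + 2 = 0)
    (hl : l ∈ Set.Icc (12 / 5) (5 / 2)) (k : ℕ) :
    l ^ k ≤ diffCount (k + 1) 0 ∧ (diffCount (k + 1) 0 : ℝ) ≤ 4 * l ^ k := by
  obtain ⟨hl₁, hl₂⟩ := hl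
  obtain ⟨h₁₀, h₁₁, h₂₀, h₂₁⟩ := diffCount_base
  have lower := (diffRecurrence_geometric hroot 1).le_of_le diffRecurrence_diffCount
    (by norm_num [h₁₀]) (by norm_num [h₁₁]; nlinarith) (by norm_num [h₂₀]; linarith)
    (by norm_num [Nat.fib_add_two, h₂₁]; nlinarith) k
  have upper := diffRecurrence_diffCount.le_of_le (diffRecurrence_geometric hroot 4)
    (by norm_num [h₁₀]) (by norm_num [h₁₁]; nlinarith) (by norm_num [h₂₀]; linarith)
    (by norm_num [Nat.fib_add_two, h₂₁]; nlinarith) k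
  exact ⟨by simpa using lower.1, upper.1⟩

lemma V_le_four_mul_pow {l : ℝ} (hroot : l ^ 3 - 2 * l ^ 2 - 2 * l + 2 = 0)
    (hl : l ∈ Set.Icc (12 / 5) (5 / 2)) {H k : ℕ} (hH : H < posFib (k + 1)) :
    (V H : ℝ) ≤ 4 * l ^ k :=
  (Nat.cast_le.2 (V_le_diffCount hH)).trans (diffCount_bounds hroot hl k).2

lemma one_le_V (H : ℕ) : 1 ≤ V H := by
  have hR : R 0 = 1 := (R_eq_repCount (m := 0) Nat.one_pos).trans (by decide)
  calc 1 = R 0 ^ 2 := by rw [hR]; rfl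
    _ ≤ V H := single_le_sum (f := fun n => R n ^ 2) (by simp) (by simp)

lemma pow_le_sq_mul_V {l : ℝ} (hroot : l ^ 3 - 2 * l ^ 2 - 2 * l + 2 = 0)
    (hl : l ∈ Set.Icc (12 / 5) (5 / 2)) {H k : ℕ} (hH : posFib k ≤ H) :
    l ^ k ≤ l ^ 2 * V H := by
  have hl₁ : 1 ≤ l := by linarith [hl.1]
  rcases Nat.lt_or_ge k 2 with hk | hk
  · calc l ^ k ≤ l ^ 2 * 1 := by rw [mul_one]; exact pow_le_pow_right₀ hl₁ hk.le
      _ ≤ l ^ 2 * V H := by gcongr; exact_mod_cast one_le_V H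
  · obtain ⟨j, rfl⟩ := Nat.exists_eq_add_of_le' hk
    rw [pow_add, mul_comm]
    gcongr
    exact (diffCount_bounds hroot hl j).1.trans
      (Nat.cast_le.2 (diffCount_le_V (hH.trans H.le_succ)))

lemma pow_le_rpow_logb_goldenRatio {l : ℝ} (hl : 1 ≤ l) {H k : ℕ} (hH : posFib k ≤ H) :
    l ^ k ≤ (H : ℝ) ^ logb φ l := by
  rw [← goldenRatio_pow_rpow_logb (by linarith) k]
  exact rpow_le_rpow (by positivity)
    ((goldenRatio_pow_le_fib k).trans (Nat.cast_le.2 hH)) (logb_nonneg one_lt_goldenRatio hl)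

lemma rpow_logb_goldenRatio_le_pow {l : ℝ} (hl : 1 ≤ l) {H k : ℕ} (hH : H < posFib (k + 1)) :
    (H : ℝ) ^ logb φ l ≤ l ^ (k + 2) := by
  rw [← goldenRatio_pow_rpow_logb (by linarith) (k + 2)]
  exact rpow_le_rpow (by positivity)
    ((Nat.cast_le.2 hH.le).trans (fib_succ_le_goldenRatio_pow (k + 2)))
    (logb_nonneg one_lt_goldenRatio hl)

lemma exists_posFib_le_lt {H : ℕ} (hH : 1 ≤ H) :
    ∃ k, posFib k ≤ H ∧ H < posFib (k + 1) := by
  have h2 : 2 ≤ Nat.greatestFib H := Nat.le_greatestFib.2 hH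
  refine ⟨Nat.greatestFib H - 2, ?_, ?_⟩
  · simpa [posFib, Nat.sub_add_cancel h2] using Nat.fib_greatestFib_le H
  · simpa [posFib, show Nat.greatestFib H - 2 + 1 + 2 = Nat.greatestFib H + 1 by omega]
      using Nat.lt_fib_greatestFib_add_one H

end FibRep

open FibRep

theorem V_order_of_magnitude (l : ℝ)
    (hroot : l ^ 3 - 2 * l ^ 2 - 2 * l + 2 = 0)
    (hmax : ∀ x : ℝ, x ^ 3 - 2 * x ^ 2 - 2 * x + 2 = 0 → x ≤ l) :
    ∃ C₁ C₂ : ℝ, 0 < C₁ ∧ C₁ < C₂ ∧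
      ∀ H : ℕ, 1 ≤ H →
        C₁ * (H : ℝ) ^ (Real.log l / Real.log ((1 + Real.sqrt 5) / 2)) ≤ (V H : ℝ) ∧
        (V H : ℝ) ≤ C₂ * (H : ℝ) ^ (Real.log l / Real.log ((1 + Real.sqrt 5) / 2)) := by
  have hl := greatest_root_mem_Icc hroot hmax
  have hl₁ : 1 < l := by linarith [hl.1]
  change ∃ C₁ C₂ : ℝ, 0 < C₁ ∧ C₁ < C₂ ∧ ∀ H : ℕ, 1 ≤ H →
    C₁ * (H : ℝ) ^ logb φ l ≤ V H ∧ (V H : ℝ) ≤ C₂ * (H : ℝ) ^ logb φ l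
  refine ⟨(l ^ 4)⁻¹, 4, by positivity,
    (inv_lt_one_of_one_lt₀ (one_lt_pow₀ hl₁ (by norm_num))).trans (by norm_num),
    fun H hH => ?_⟩
  obtain ⟨k, hk₁, hk₂⟩ := exists_posFib_le_lt hH
  constructor
  · rw [inv_mul_le_iff₀ (by positivity)]
    calc (H : ℝ) ^ logb φ l ≤ l ^ 2 * l ^ k := by
          rw [← pow_add, add_comm]; exact rpow_logb_goldenRatio_le_pow hl₁.le hk₂
      _ ≤ l ^ 2 * (l ^ 2 * V H) := by gcongr; exact pow_le_sq_mul_V hroot hl hk₁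
      _ = l ^ 4 * V H := by ring
  · calc (V H : ℝ) ≤ 4 * l ^ k := V_le_four_mul_pow hroot hl hk₂
      _ ≤ 4 * (H : ℝ) ^ logb φ l := by
          gcongr; exact pow_le_rpow_logb_goldenRatio hl₁.le hk₁
end
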